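/- arXiv:1501.04805 — 11 statements merged into one kernel-verified Lean document; each statement's English description precedes it below -/
import Mathlib

section
/- Over 𝔽₂, the following three identities hold (commutativity of the state-cube face in case 2.a, where among the three circles a, b, c only a is homotopically nontrivial): (Δ¹ ⊗ id) ∘ Δ¹ = (id ⊗ Δ) ∘ Δ¹ as maps V → V⊗V⊗V; (m¹ ⊗ id) ∘ (id ⊗ Δ) = Δ¹ ∘ m¹ as maps V⊗V → V⊗V; and m¹ ∘ (m¹ ⊗ id) = m¹ ∘ (id ⊗ m) as maps V⊗V⊗V → V. -/
open TensorProduct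

noncomputable section

/-- The ground field `𝔽₂`. -/
abbrev F2 : Type := ZMod 2

/-- The two-dimensional `𝔽₂`-vector space `V` with basis `v₊, v₋`,
realized as pairs of coordinates in this basis. -/
abbrev V : Type := F2 × F2

/-- The basis vector `v₊`. -/
def vp : V := (1, 0)

/-- The basis vector `v₋`. -/
def vm : V := (0, 1)

/-- Helper: the bilinear map associated to a pair of bilinear coordinate forms. -/
def bil (f : V → V → V)
    (ha : ∀ x x' y, f (x + x') y = f x y + f x' y)
    (hs : ∀ (c : F2) x y, f (c • x) y = c • f x y)
    (ha' : ∀ x y y', f x (y + y') = f x y + f x y')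
    (hs' : ∀ (c : F2) x y, f x (c • y) = c • f x y) :
    V ⊗[F2] V →ₗ[F2] V :=
  TensorProduct.lift (LinearMap.mk₂ F2 f ha hs ha' hs')

/-- The multiplication `m` of the Khovanov complex:
`m(v₊⊗v₊)=v₊, m(v₊⊗v₋)=v₋, m(v₋⊗v₊)=v₋, m(v₋⊗v₋)=0`. -/
def mKh : V ⊗[F2] V →ₗ[F2] V :=
  bil (fun x y => (x.1 * y.1, x.1 * y.2 + x.2 * y.1))
    (by intros; apply Prod.ext <;> simp <;> ring)
    (by intros; apply Prod.ext <;> simp [smul_eq_mul] <;> ring)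
    (by intros; apply Prod.ext <;> simp <;> ring)
    (by intros; apply Prod.ext <;> simp [smul_eq_mul] <;> ring)

/-- The map `m⁰`: `m⁰(v₊⊗v₊)=0, m⁰(v₊⊗v₋)=v₋, m⁰(v₋⊗v₊)=v₋, m⁰(v₋⊗v₋)=0`. -/
def m0 : V ⊗[F2] V →ₗ[F2] V :=
  bil (fun x y => (0, x.1 * y.2 + x.2 * y.1))
    (by intros; apply Prod.ext <;> simp <;> ring)
    (by intros; apply Prod.ext <;> simp [smul_eq_mul] <;> ring)
    (by intros; apply Prod.ext <;> simp <;> ring)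
    (by intros; apply Prod.ext <;> simp [smul_eq_mul] <;> ring)

/-- The map `m¹`: `m¹(v₊⊗v₊)=v₊, m¹(v₊⊗v₋)=0, m¹(v₋⊗v₊)=v₋, m¹(v₋⊗v₋)=0`. -/
def m1 : V ⊗[F2] V →ₗ[F2] V :=
  bil (fun x y => (x.1 * y.1, x.2 * y.1))
    (by intros; apply Prod.ext <;> simp <;> ring)
    (by intros; apply Prod.ext <;> simp [smul_eq_mul] <;> ring)
    (by intros; apply Prod.ext <;> simp <;> ring)
    (by intros; apply Prod.ext <;> simp [smul_eq_mul] <;> ring)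

/-- The map `m²`: `m²(v₊⊗v₊)=v₊, m²(v₊⊗v₋)=v₋, m²(v₋⊗v₊)=0, m²(v₋⊗v₋)=0`. -/
def m2 : V ⊗[F2] V →ₗ[F2] V :=
  bil (fun x y => (x.1 * y.1, x.1 * y.2))
    (by intros; apply Prod.ext <;> simp <;> ring)
    (by intros; apply Prod.ext <;> simp [smul_eq_mul] <;> ring)
    (by intros; apply Prod.ext <;> simp <;> ring)
    (by intros; apply Prod.ext <;> simp [smul_eq_mul] <;> ring)

/-- Helper: the linear map `V → V ⊗ V` sending `v₊ ↦ a` and `v₋ ↦ b`. -/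
def diag (a b : V ⊗[F2] V) : V →ₗ[F2] V ⊗[F2] V :=
  (LinearMap.fst F2 F2 F2).smulRight a + (LinearMap.snd F2 F2 F2).smulRight b

/-- The comultiplication `Δ`: `Δ(v₊)=v₊⊗v₋+v₋⊗v₊, Δ(v₋)=v₋⊗v₋`. -/
def ΔKh : V →ₗ[F2] V ⊗[F2] V := diag (vp ⊗ₜ vm + vm ⊗ₜ vp) (vm ⊗ₜ vm)

/-- The map `Δ⁰`: `Δ⁰(v₊)=v₊⊗v₋+v₋⊗v₊, Δ⁰(v₋)=0`. -/
def Δ0 : V →ₗ[F2] V ⊗[F2] V := diag (vp ⊗ₜ vm + vm ⊗ₜ vp) 0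

/-- The map `Δ¹`: `Δ¹(v₊)=v₊⊗v₋, Δ¹(v₋)=v₋⊗v₋`. -/
def Δ1 : V →ₗ[F2] V ⊗[F2] V := diag (vp ⊗ₜ vm) (vm ⊗ₜ vm)

/-- The map `Δ²`: `Δ²(v₊)=v₋⊗v₊, Δ²(v₋)=v₋⊗v₋`. -/
def Δ2 : V →ₗ[F2] V ⊗[F2] V := diag (vm ⊗ₜ vp) (vm ⊗ₜ vm)

/-- The associator `(V ⊗ V) ⊗ V ≃ V ⊗ (V ⊗ V)` as a linear map. -/
noncomputable def α : (V ⊗[F2] V) ⊗[F2] V →ₗ[F2] V ⊗[F2] (V ⊗[F2] V) :=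
  (TensorProduct.assoc F2 V V V).toLinearMap

/-- The inverse associator as a linear map. -/
noncomputable def αinv : V ⊗[F2] (V ⊗[F2] V) →ₗ[F2] (V ⊗[F2] V) ⊗[F2] V :=
  (TensorProduct.assoc F2 V V V).symm.toLinearMap

/-! Writing `ε` for the `v₊`-coordinate, `m¹(x ⊗ y) = ε(y) x` and `Δ¹(x) = x ⊗ v₋`. The three
identities then reduce, respectively, to `Δ(v₋) = v₋ ⊗ v₋`, to `(ε ⊗ id)(Δ y) = ε(y) v₋`, and to the
multiplicativity `ε(m(y ⊗ z)) = ε(y) ε(z)`. -/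

lemma m1_tmul (x y : V) : m1 (x ⊗ₜ y) = y.1 • x :=
  Prod.ext (mul_comm _ _) (mul_comm _ _)

lemma fst_mKh_tmul (x y : V) : (mKh (x ⊗ₜ y)).1 = x.1 * y.1 := rfl

lemma Δ1_apply (x : V) : Δ1 x = x ⊗ₜ vm := by
  obtain ⟨a, b⟩ := x
  simp [Δ1, diag, vp, vm, smul_tmul', ← add_tmul]

lemma ΔKh_apply (y : V) : ΔKh y = y.1 • (vp ⊗ₜ vm + vm ⊗ₜ vp) + y.2 • (vm ⊗ₜ vm) := rfl

lemma ΔKh_vm : ΔKh vm = vm ⊗ₜ vm := by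
  simp [ΔKh_apply, vm]

/-- case 2.a face commutativity:
`(Δ¹ ⊗ id) ∘ Δ¹ = (id ⊗ Δ) ∘ Δ¹`, `(m¹ ⊗ id) ∘ (id ⊗ Δ) = Δ¹ ∘ m¹`,
`m¹ ∘ (m¹ ⊗ id) = m¹ ∘ (id ⊗ m)`. -/
theorem face_case_2a :
    α ∘ₗ Δ1.rTensor V ∘ₗ Δ1 = ΔKh.lTensor V ∘ₗ Δ1 ∧
    m1.rTensor V ∘ₗ αinv ∘ₗ ΔKh.lTensor V = Δ1 ∘ₗ m1 ∧
    m1 ∘ₗ m1.rTensor V = m1 ∘ₗ mKh.lTensor V ∘ₗ α := by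
  refine ⟨?_, ?_, ?_⟩
  · refine LinearMap.ext fun x => ?_
    simp [Δ1_apply, ΔKh_vm, α]
  · refine TensorProduct.ext' fun x y => ?_
    simp [ΔKh_apply, αinv, m1_tmul, Δ1_apply, tmul_add, smul_tmul', vp, vm]
  · refine TensorProduct.ext_threefold fun x y z => ?_
    simp [m1_tmul, fst_mKh_tmul, α, smul_smul, mul_comm]
end
end

section
/- Over 𝔽₂, the following three identities hold (commutativity of the state-cube face in case 2.b, where among the three circles a, b, c only b is homotopically nontrivial): (Δ² ⊗ id) ∘ Δ¹ = (id ⊗ Δ¹) ∘ Δ² as maps V → V⊗V⊗V; (m² ⊗ id) ∘ (id ⊗ Δ¹) = Δ¹ ∘ m² as maps V⊗V → V⊗V; and m¹ ∘ (m² ⊗ id) = m² ∘ (id ⊗ m¹) as maps V⊗V⊗V → V. -/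
open TensorProduct

noncomputable section

lemma Vdec (x : V) : x = x.1 • vp + x.2 • vm := by
  apply Prod.ext <;> simp [vp, vm]

/-- case 2.b face commutativity:
`(Δ² ⊗ id) ∘ Δ¹ = (id ⊗ Δ¹) ∘ Δ²`, `(m² ⊗ id) ∘ (id ⊗ Δ¹) = Δ¹ ∘ m²`,
`m¹ ∘ (m² ⊗ id) = m² ∘ (id ⊗ m¹)`. -/
theorem face_case_2b :
    α ∘ₗ Δ2.rTensor V ∘ₗ Δ1 = Δ1.lTensor V ∘ₗ Δ2 ∧
    m2.rTensor V ∘ₗ αinv ∘ₗ Δ1.lTensor V = Δ1 ∘ₗ m2 ∧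
    m1 ∘ₗ m2.rTensor V = m2 ∘ₗ m1.lTensor V ∘ₗ α := by
  refine ⟨?_, ?_, ?_⟩
  · apply LinearMap.ext; intro x
    rw [Vdec x]
    simp [Δ1, Δ2, diag, vp, vm, TensorProduct.tmul_add, TensorProduct.add_tmul, α, m1, m2, bil]
  · apply TensorProduct.ext'; intro x y
    rw [Vdec x, Vdec y]
    simp [Δ1, Δ2, diag, vp, vm, TensorProduct.tmul_add, TensorProduct.add_tmul,
      TensorProduct.smul_tmul', TensorProduct.tmul_smul, α, αinv, m1, m2, bil,
      smul_smul, mul_comm]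
  · apply TensorProduct.ext'; intro xy z
    induction xy using TensorProduct.induction_on with
    | zero => simp
    | tmul x y =>
      rw [Vdec x, Vdec y, Vdec z]
      simp [vp, vm, TensorProduct.tmul_add, TensorProduct.add_tmul,
        TensorProduct.smul_tmul', TensorProduct.tmul_smul, α, m1, m2, bil,
        smul_smul, mul_comm, mul_assoc, Prod.smul_mk]
      exact ⟨mul_left_comm _ _ _, mul_left_comm _ _ _⟩
    | add u w hu hw => simp_all [TensorProduct.add_tmul]
end
end

section
/- Over 𝔽₂, the following three identities hold (commutativity of the state-cube face in case 2.c, where among the three circles a, b, c only c is homotopically nontrivial): (Δ ⊗ id) ∘ Δ² = (id ⊗ Δ²) ∘ Δ² as maps V → V⊗V⊗V; (m ⊗ id) ∘ (id ⊗ Δ²) = Δ² ∘ m² as maps V⊗V → V⊗V; and m² ∘ (m ⊗ id) = m² ∘ (id ⊗ m²) as maps V⊗V⊗V → V. -/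
open TensorProduct

noncomputable section

/-- case 2.c face commutativity:
`(Δ ⊗ id) ∘ Δ² = (id ⊗ Δ²) ∘ Δ²`, `(m ⊗ id) ∘ (id ⊗ Δ²) = Δ² ∘ m²`,
`m² ∘ (m ⊗ id) = m² ∘ (id ⊗ m²)`. -/
theorem face_case_2c :
    α ∘ₗ ΔKh.rTensor V ∘ₗ Δ2 = Δ2.lTensor V ∘ₗ Δ2 ∧
    mKh.rTensor V ∘ₗ αinv ∘ₗ Δ2.lTensor V = Δ2 ∘ₗ m2 ∧
    m2 ∘ₗ mKh.rTensor V = m2 ∘ₗ m2.lTensor V ∘ₗ α := by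
  refine ⟨?_, ?_, ?_⟩
  · apply LinearMap.ext; intro x
    simp [ΔKh, Δ2, diag, α, vp, vm, TensorProduct.smul_tmul', TensorProduct.smul_tmul,
      tmul_add, add_tmul, smul_add]
  · apply TensorProduct.ext'; intro x y
    simp [ΔKh, Δ2, diag, mKh, m2, bil, αinv, vp, vm, TensorProduct.smul_tmul',
      TensorProduct.smul_tmul, tmul_add, add_tmul, smul_add, smul_smul, mul_comm]
  · apply TensorProduct.ext'; intro xy z
    induction xy using TensorProduct.induction_on with
    | zero => simp
    | add a b ha hb => simp_all [tmul_add, add_tmul]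
    | tmul x y =>
      simp [mKh, m2, bil, α, vp, vm]
      exact ⟨mul_assoc _ _ _, mul_assoc _ _ _⟩
end
end

section
/- Over 𝔽₂, the following three identities hold (commutativity of the state-cube face in case 3.a.i, where circle a is homotopically trivial, b and c are nontrivial, and the merged circle bc is trivial): (Δ² ⊗ id) ∘ Δ⁰ = (id ⊗ Δ⁰) ∘ Δ as maps V → V⊗V⊗V; (m² ⊗ id) ∘ (id ⊗ Δ⁰) = Δ⁰ ∘ m as maps V⊗V → V⊗V; and m⁰ ∘ (m² ⊗ id) = m ∘ (id ⊗ m⁰) as maps V⊗V⊗V → V. -/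
open TensorProduct

noncomputable section

@[simp] lemma diag_apply (a b : V ⊗[F2] V) (x : V) : diag a b x = x.1 • a + x.2 • b := by
  simp [diag]

@[simp] lemma mKh_tmul (x y : V) :
    mKh (x ⊗ₜ[F2] y) = (x.1 * y.1, x.1 * y.2 + x.2 * y.1) := rfl

@[simp] lemma m0_tmul (x y : V) : m0 (x ⊗ₜ[F2] y) = (0, x.1 * y.2 + x.2 * y.1) := rfl

@[simp] lemma m2_tmul (x y : V) : m2 (x ⊗ₜ[F2] y) = (x.1 * y.1, x.1 * y.2) := rfl

@[simp] lemma α_tmul (x y z : V) : α ((x ⊗ₜ[F2] y) ⊗ₜ[F2] z) = x ⊗ₜ[F2] (y ⊗ₜ[F2] z) := rfl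

@[simp] lemma αinv_tmul (x y z : V) : αinv (x ⊗ₜ[F2] (y ⊗ₜ[F2] z)) = (x ⊗ₜ[F2] y) ⊗ₜ[F2] z :=
  rfl

theorem α_comp_rTensor_Δ2_comp_Δ0 : α ∘ₗ Δ2.rTensor V ∘ₗ Δ0 = Δ0.lTensor V ∘ₗ ΔKh := by
  ext <;> simp [Δ0, Δ2, ΔKh, vp, vm, tmul_add]

theorem rTensor_m2_comp_αinv_comp_lTensor_Δ0 :
    m2.rTensor V ∘ₗ αinv ∘ₗ Δ0.lTensor V = Δ0 ∘ₗ mKh := by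
  ext <;> simp [Δ0, vp, vm, tmul_add, Prod.mk_zero_zero]

theorem m0_comp_rTensor_m2 : m0 ∘ₗ m2.rTensor V = mKh ∘ₗ m0.lTensor V ∘ₗ α := by
  ext <;> simp

/-- case 3.a.i face commutativity:
`(Δ² ⊗ id) ∘ Δ⁰ = (id ⊗ Δ⁰) ∘ Δ`, `(m² ⊗ id) ∘ (id ⊗ Δ⁰) = Δ⁰ ∘ m`,
`m⁰ ∘ (m² ⊗ id) = m ∘ (id ⊗ m⁰)`. -/
theorem face_case_3ai :
    α ∘ₗ Δ2.rTensor V ∘ₗ Δ0 = Δ0.lTensor V ∘ₗ ΔKh ∧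
    m2.rTensor V ∘ₗ αinv ∘ₗ Δ0.lTensor V = Δ0 ∘ₗ mKh ∧
    m0 ∘ₗ m2.rTensor V = mKh ∘ₗ m0.lTensor V ∘ₗ α :=
  ⟨α_comp_rTensor_Δ2_comp_Δ0, rTensor_m2_comp_αinv_comp_lTensor_Δ0, m0_comp_rTensor_m2⟩
end
end

section
/- Over 𝔽₂, the following three identities hold (commutativity of the state-cube face in case 3.b.i, where circle b is homotopically trivial, a and c are nontrivial, and the total merged circle abc is trivial): (Δ¹ ⊗ id) ∘ Δ⁰ = (id ⊗ Δ²) ∘ Δ⁰ as maps V → V⊗V⊗V; (m¹ ⊗ id) ∘ (id ⊗ Δ²) = Δ⁰ ∘ m⁰ as maps V⊗V → V⊗V; and m⁰ ∘ (m¹ ⊗ id) = m⁰ ∘ (id ⊗ m²) as maps V⊗V⊗V → V. -/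
open TensorProduct

noncomputable section

/-!
Both `Δ¹` and `Δ²` insert a `v₋`: `Δ¹ y = y ⊗ v₋` and `Δ² y = v₋ ⊗ y`; and `m¹`, `m²` contract
with the `v₊`-coordinate `ε = fst`: `m¹ (x ⊗ y) = ε y • x`, `m² (y ⊗ z) = ε y • z`.
Hence the first and third identities are instances of the associativity of `⊗`, already before
composing with `Δ⁰` resp. `m⁰`. In the second identity both sides vanish: by associativity
the left side is `(m¹ ∘ Δ¹) ⊗ id`, and `m¹ (y ⊗ v₋) = 0`; on the right, `m⁰` takes values in
`𝔽₂ v₋ = ker Δ⁰`.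
-/

namespace TensorProduct

variable {R M N P : Type*} [CommSemiring R] [AddCommMonoid M] [AddCommMonoid N]
  [AddCommMonoid P] [Module R M] [Module R N] [Module R P]

theorem assoc_comp_rTensor_flip_mk (u : N) :
    (TensorProduct.assoc R M N P).toLinearMap ∘ₗ ((mk R M N).flip u).rTensor P =
      (mk R N P u).lTensor M := by
  ext x y
  rfl

theorem rTensor_rid_comp_lTensor (φ : N →ₗ[R] R) :
    (TensorProduct.rid R M ∘ₗ φ.lTensor M).rTensor P =
      (TensorProduct.lid R P ∘ₗ φ.rTensor P).lTensor M ∘ₗ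
        (TensorProduct.assoc R M N P).toLinearMap := by
  apply TensorProduct.ext_threefold
  intro x y z
  simp [smul_tmul]

end TensorProduct

theorem Δ1_eq_flip_mk : Δ1 = (mk F2 V V).flip vm := by
  ext <;> simp [Δ1, diag, vp, vm]

theorem Δ2_eq_mk : Δ2 = mk F2 V V vm := by
  ext <;> simp [Δ2, diag, vp, vm]

theorem m1_eq_rid_comp_lTensor_fst :
    m1 = TensorProduct.rid F2 V ∘ₗ (LinearMap.fst F2 F2 F2).lTensor V := by
  refine TensorProduct.ext' fun x y => ?_
  simp [m1, bil, Prod.ext_iff, mul_comm]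

theorem m2_eq_lid_comp_rTensor_fst :
    m2 = TensorProduct.lid F2 V ∘ₗ (LinearMap.fst F2 F2 F2).rTensor V := by
  refine TensorProduct.ext' fun x y => ?_
  simp [m2, bil, Prod.ext_iff]

theorem m1_comp_Δ1 : m1 ∘ₗ Δ1 = 0 := by
  refine LinearMap.ext fun y => ?_
  simp [m1_eq_rid_comp_lTensor_fst, Δ1_eq_flip_mk, vm]

theorem Δ0_comp_m0 : Δ0 ∘ₗ m0 = 0 := by
  refine TensorProduct.ext' fun x y => ?_
  simp [Δ0, diag, m0, bil]

theorem α_comp_rTensor_Δ1 : α ∘ₗ Δ1.rTensor V = Δ2.lTensor V := by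
  rw [Δ1_eq_flip_mk, Δ2_eq_mk]
  exact TensorProduct.assoc_comp_rTensor_flip_mk vm

theorem αinv_comp_lTensor_Δ2 : αinv ∘ₗ Δ2.lTensor V = Δ1.rTensor V := by
  rw [← α_comp_rTensor_Δ1, ← LinearMap.comp_assoc, α, αinv, LinearEquiv.symm_comp,
    LinearMap.id_comp]

/-- case 3.b.i face commutativity:
`(Δ¹ ⊗ id) ∘ Δ⁰ = (id ⊗ Δ²) ∘ Δ⁰`, `(m¹ ⊗ id) ∘ (id ⊗ Δ²) = Δ⁰ ∘ m⁰`,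
`m⁰ ∘ (m¹ ⊗ id) = m⁰ ∘ (id ⊗ m²)`. -/
theorem face_case_3bi :
    α ∘ₗ Δ1.rTensor V ∘ₗ Δ0 = Δ2.lTensor V ∘ₗ Δ0 ∧
    m1.rTensor V ∘ₗ αinv ∘ₗ Δ2.lTensor V = Δ0 ∘ₗ m0 ∧
    m0 ∘ₗ m1.rTensor V = m0 ∘ₗ m2.lTensor V ∘ₗ α := by
  refine ⟨?_, ?_, ?_⟩
  · rw [← LinearMap.comp_assoc, α_comp_rTensor_Δ1]
  · rw [αinv_comp_lTensor_Δ2, ← LinearMap.rTensor_comp, m1_comp_Δ1, LinearMap.rTensor_zero,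
      Δ0_comp_m0]
  · rw [m1_eq_rid_comp_lTensor_fst, m2_eq_lid_comp_rTensor_fst, α,
      TensorProduct.rTensor_rid_comp_lTensor]
end
end

section
/- Over 𝔽₂, the composition (m¹ ⊗ id) ∘ (id ⊗ Δ²) : V⊗V → V⊗V is the zero map (commutativity of the state-cube face in case 3.b.ii, where circle b is trivial, a and c are nontrivial, and the merged circle abc is nontrivial). -/
open TensorProduct

noncomputable section

theorem LinearMap.rTensor_comp_assoc_symm_comp_lTensor_mk_eq_zero {R A B D E : Type*}
    [CommSemiring R] [AddCommMonoid A] [AddCommMonoid B] [AddCommMonoid D] [AddCommMonoid E]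
    [Module R A] [Module R B] [Module R D] [Module R E]
    (μ : A ⊗[R] B →ₗ[R] D) (b : B) (hμ : ∀ a, μ (a ⊗ₜ b) = 0) :
    μ.rTensor E ∘ₗ (TensorProduct.assoc R A B E).symm.toLinearMap ∘ₗ
      (TensorProduct.mk R B E b).lTensor A = 0 := by
  ext a e
  simp [hμ]

theorem Δ2_eq_mk_vm : Δ2 = TensorProduct.mk F2 V V vm := by
  ext <;> simp [Δ2, diag, vp, vm]

theorem m1_tmul_vm (x : V) : m1 (x ⊗ₜ vm) = 0 := by
  simp [m1, bil, vm]

/-- case 3.b.ii: `(m¹ ⊗ id) ∘ (id ⊗ Δ²) = 0` as a map `V⊗V → V⊗V`. -/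
theorem face_case_3bii :
    m1.rTensor V ∘ₗ αinv ∘ₗ Δ2.lTensor V = 0 := by
  rw [Δ2_eq_mk_vm]
  exact LinearMap.rTensor_comp_assoc_symm_comp_lTensor_mk_eq_zero m1 vm m1_tmul_vm
end
end

section
/- Over 𝔽₂, the following three identities hold (commutativity of the state-cube face in case 3.c.i, where circle c is homotopically trivial, a and b are nontrivial, and the merged circle ab is trivial): (Δ⁰ ⊗ id) ∘ Δ = (id ⊗ Δ¹) ∘ Δ⁰ as maps V → V⊗V⊗V; (m⁰ ⊗ id) ∘ (id ⊗ Δ¹) = Δ ∘ m⁰ as maps V⊗V → V⊗V; and m ∘ (m⁰ ⊗ id) = m⁰ ∘ (id ⊗ m¹) as maps V⊗V⊗V → V. -/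
open TensorProduct

noncomputable section

/-- case 3.c.i face commutativity:
`(Δ⁰ ⊗ id) ∘ Δ = (id ⊗ Δ¹) ∘ Δ⁰`, `(m⁰ ⊗ id) ∘ (id ⊗ Δ¹) = Δ ∘ m⁰`,
`m ∘ (m⁰ ⊗ id) = m⁰ ∘ (id ⊗ m¹)`. -/
theorem face_case_3ci :
    α ∘ₗ Δ0.rTensor V ∘ₗ ΔKh = Δ1.lTensor V ∘ₗ Δ0 ∧
    m0.rTensor V ∘ₗ αinv ∘ₗ Δ1.lTensor V = ΔKh ∘ₗ m0 ∧
    mKh ∘ₗ m0.rTensor V = m0 ∘ₗ m1.lTensor V ∘ₗ α := by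
  refine ⟨?_, ?_, ?_⟩
  · apply LinearMap.ext; intro x
    simp [α, ΔKh, Δ0, Δ1, diag, vp, vm, TensorProduct.smul_tmul', TensorProduct.tmul_add,
      TensorProduct.add_tmul, TensorProduct.tmul_smul]
    abel
  · apply TensorProduct.ext'; intro x y
    simp [αinv, ΔKh, Δ0, Δ1, diag, m0, bil, vp, vm, TensorProduct.smul_tmul',
      TensorProduct.tmul_add, TensorProduct.add_tmul, TensorProduct.tmul_smul]
    rw [← TensorProduct.add_tmul]
    congr 1
    simp [add_comm]
  · apply TensorProduct.ext'; intro xy z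
    induction xy using TensorProduct.induction_on with
    | zero => simp
    | tmul x y =>
      simp [α, mKh, m0, m1, bil, TensorProduct.smul_tmul', TensorProduct.tmul_smul]
      ring
    | add a b ha hb => simp_all [TensorProduct.add_tmul]
end
end

section
/- Over 𝔽₂, the composition (Δ⁰ ⊗ id) ∘ Δ² : V → V⊗V⊗V is the zero map, and the composition m² ∘ (m⁰ ⊗ id) : V⊗V⊗V → V is the zero map (commutativity of the state-cube face in case 4.b, where circles a, b, c are all nontrivial, the merged circle ab is trivial, and bc is nontrivial). -/
open TensorProduct

noncomputable section

/-- case 4.b: `(Δ⁰ ⊗ id) ∘ Δ² = 0` and `m² ∘ (m⁰ ⊗ id) = 0`. -/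
theorem face_case_4b :
    Δ0.rTensor V ∘ₗ Δ2 = 0 ∧ m2 ∘ₗ m0.rTensor V = 0 := by
  constructor
  · apply LinearMap.ext; intro x
    rw [LinearMap.zero_apply, LinearMap.comp_apply]
    simp only [Δ0, Δ2, diag, vp, vm, LinearMap.add_apply, LinearMap.coe_smulRight,
      LinearMap.fst_apply, LinearMap.snd_apply, map_add, map_smul,
      LinearMap.rTensor_tmul, smul_zero, add_zero, zero_smul, mul_zero, zero_mul]
    simp
  · apply TensorProduct.ext'
    intro xy z
    induction xy using TensorProduct.induction_on with
    | zero => rw [TensorProduct.zero_tmul, LinearMap.zero_apply, LinearMap.map_zero]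
    | add a b ha hb =>
      rw [TensorProduct.add_tmul, map_add, LinearMap.zero_apply] at *
      rw [ha, hb, add_zero]
    | tmul x y =>
      rw [LinearMap.zero_apply, LinearMap.comp_apply, LinearMap.rTensor_tmul]
      simp [m0, m2, bil, vp, vm]
end
end

section
/- Over 𝔽₂, the composition (id ⊗ Δ⁰) ∘ Δ¹ : V → V⊗V⊗V is the zero map, and the composition m¹ ∘ (id ⊗ m⁰) : V⊗V⊗V → V is the zero map (commutativity of the state-cube face in case 4.c, where circles a, b, c are all nontrivial, the merged circle ab is nontrivial, and bc is trivial). -/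
open TensorProduct

noncomputable section

/-- case 4.c: `(id ⊗ Δ⁰) ∘ Δ¹ = 0` and `m¹ ∘ (id ⊗ m⁰) = 0`. -/
theorem face_case_4c :
    Δ0.lTensor V ∘ₗ Δ1 = 0 ∧ m1 ∘ₗ m0.lTensor V = 0 := by
  constructor
  · apply LinearMap.ext
    intro x
    have hx : x = x.1 • vp + x.2 • vm := by
      apply Prod.ext <;> simp [vp, vm]
    rw [hx]
    simp [Δ1, Δ0, diag, vp, vm, LinearMap.lTensor_tmul, TensorProduct.tmul_add,
      TensorProduct.smul_tmul']
  · apply TensorProduct.ext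
    apply LinearMap.ext; intro x
    apply TensorProduct.ext'
    intro y z
    simp [m1, m0, bil, LinearMap.lTensor_tmul]
end
end

section
/- Over 𝔽₂, all four compositions m ∘ Δ, m⁰ ∘ Δ⁰, m¹ ∘ Δ¹, m² ∘ Δ² : V → V are the zero map (this is the commutativity relation of the nontrivial state-cube face arising in the nonorientable case VIII, where it takes the form m_h ∘ Δ_h = 0). -/
open TensorProduct

noncomputable section

/-- `m ∘ Δ = m⁰ ∘ Δ⁰ = m¹ ∘ Δ¹ = m² ∘ Δ² = 0` (nonorientable case VIII). -/
theorem mh_comp_Deltah_eq_zero :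
    mKh ∘ₗ ΔKh = 0 ∧ m0 ∘ₗ Δ0 = 0 ∧ m1 ∘ₗ Δ1 = 0 ∧ m2 ∘ₗ Δ2 = 0 := by
  refine ⟨?_, ?_, ?_, ?_⟩ <;>
  · apply LinearMap.ext; intro x
    simp [mKh, m0, m1, m2, ΔKh, Δ0, Δ1, Δ2, diag, bil, vp, vm,
      CharTwo.add_self_eq_zero]
end
end

section
/- Over 𝔽₂, let π : V⊗V → V ⊗ (V/span(v₊)) be the map id ⊗ q, where q : V → V/span(v₊) is the quotient map. Then π ∘ Δ : V → V ⊗ (V/span(v₊)) is a linear isomorphism, and likewise π ∘ Δ¹ is a linear isomorphism (this is the second half of the key Lemma in the proof of invariance of homotopical Khovanov homology under the first Reidemeister move). -/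
open TensorProduct

noncomputable section

/-!
Both `π ∘ Δ` and `π ∘ Δ¹` send `x` to `x ⊗ [v₋]`: they agree with it on `v₋`, and on `v₊` they
differ from it only by terms of the form `_ ⊗ [v₊] = 0`. The quotient `V ⧸ span(v₊)` is a line
with basis `[v₋]` (the second coordinate identifies it with `𝔽₂`), and tensoring with such a basis
vector is an isomorphism `M ≅ M ⊗ R ≅ M ⊗ Q`.
-/

theorem TensorProduct.bijective_flip_mk_of_linearEquiv {R M Q : Type*} [CommSemiring R]
    [AddCommMonoid M] [Module R M] [AddCommMonoid Q] [Module R Q]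
    (e : Q ≃ₗ[R] R) {w : Q} (hw : e w = 1) :
    Function.Bijective ((TensorProduct.mk R M Q).flip w) := by
  have hw' : e.symm 1 = w := e.symm_apply_eq.mpr hw.symm
  convert ((TensorProduct.rid R M).symm.trans (e.symm.lTensor M)).bijective using 1
  ext x
  simp [hw']

namespace Khovanov

theorem ker_snd_eq_span_vp : LinearMap.ker (LinearMap.snd F2 F2 F2) = Submodule.span F2 {vp} := by
  ext x
  simp only [LinearMap.mem_ker, LinearMap.snd_apply, Submodule.mem_span_singleton, vp]
  constructor
  · intro hx
    exact ⟨x.1, Prod.ext (by simp) (by simp [hx])⟩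
  · rintro ⟨a, rfl⟩
    simp

def quotSpanVpEquiv : (V ⧸ Submodule.span F2 {vp}) ≃ₗ[F2] F2 :=
  (Submodule.quotEquivOfEq _ _ ker_snd_eq_span_vp.symm).trans
    ((LinearMap.snd F2 F2 F2).quotKerEquivOfSurjective LinearMap.snd_surjective)

theorem quotSpanVpEquiv_mkQ_vm :
    quotSpanVpEquiv ((Submodule.span F2 {vp}).mkQ vm) = 1 := rfl

theorem mk_vp : (Submodule.Quotient.mk vp : V ⧸ Submodule.span F2 {vp}) = 0 :=
  (Submodule.Quotient.mk_eq_zero _).mpr (Submodule.mem_span_singleton_self vp)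

theorem lTensor_mkQ_comp_ΔKh :
    LinearMap.lTensor V (Submodule.span F2 {vp}).mkQ ∘ₗ ΔKh =
      (TensorProduct.mk F2 V _).flip ((Submodule.span F2 {vp}).mkQ vm) := by
  ext <;> simp [ΔKh, diag, mk_vp] <;> rfl

theorem lTensor_mkQ_comp_Δ1 :
    LinearMap.lTensor V (Submodule.span F2 {vp}).mkQ ∘ₗ Δ1 =
      (TensorProduct.mk F2 V _).flip ((Submodule.span F2 {vp}).mkQ vm) := by
  ext <;> simp [Δ1, diag] <;> rfl

end Khovanov

/-- with `π = id ⊗ q` where `q : V → V/span(v₊)` is the quotient map,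
both `π ∘ Δ` and `π ∘ Δ¹` are linear isomorphisms `V → V ⊗ (V/span(v₊))`. -/
theorem pi_comp_Delta_bijective :
    Function.Bijective
      ⇑(LinearMap.lTensor V (Submodule.span F2 {vp}).mkQ ∘ₗ ΔKh) ∧
    Function.Bijective
      ⇑(LinearMap.lTensor V (Submodule.span F2 {vp}).mkQ ∘ₗ Δ1) := by
  have h := TensorProduct.bijective_flip_mk_of_linearEquiv (M := V) Khovanov.quotSpanVpEquiv
    Khovanov.quotSpanVpEquiv_mkQ_vm
  rw [Khovanov.lTensor_mkQ_comp_ΔKh, Khovanov.lTensor_mkQ_comp_Δ1]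
  exact ⟨h, h⟩
end
end
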